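/- arXiv:2302.11882 — 5 statements merged into one kernel-verified Lean document; each statement's English description precedes it below -/
import Mathlib

section
/- Let A be a (not necessarily commutative) ring, ι a linearly ordered type, and x : ι → A a family of elements such that x i * x j = - (x j * x i) whenever i ≠ j. For a finite subset I of ι let X_I denote the product of the x i over i ∈ I taken in increasing order. Then for any two finite subsets I and J of ι, X_I * X_J = (-1)^(|I|·|J| - |I ∩ J|) * (X_J * X_I). -/
/-!
Moving a single `x i` across a word `x j₁ ⋯ x jₙ` picks up one sign for every letter `x j` with
`j ≠ i`. Moving `X_I` across `X_J` letter by letter therefore gives the sign `(-1)^N`, where `N`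
counts the pairs `(i, j) ∈ I × J` with `i ≠ j`, that is `N = |I|·|J| - |I ∩ J|` exactly.
-/

open Finset

section Anticommuting

variable {A ι : Type*} [Ring A] [DecidableEq ι] {x : ι → A}

theorem mul_prod_map_of_anticomm (hx : ∀ i j, i ≠ j → x i * x j = -(x j * x i))
    (i : ι) (l : List ι) :
    x i * (l.map x).prod = (-1) ^ l.countP (· ≠ i) * ((l.map x).prod * x i) := by
  induction l with
  | nil => simp
  | cons a t ih =>
    set n := t.countP (· ≠ i)
    have hcount : (a :: t).countP (· ≠ i) = n + if a = i then 0 else 1 := by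
      simp [List.countP_cons, n]
    have hpast : x a * (x i * (t.map x).prod) = (-1) ^ n * (x a * (t.map x).prod * x i) := by
      rw [ih, ← mul_assoc, ← ((Commute.neg_one_left _).pow_left n).eq, mul_assoc, mul_assoc]
    rw [List.map_cons, List.prod_cons, hcount]
    by_cases ha : a = i
    · subst ha
      rw [if_pos rfl, add_zero, hpast]
    · rw [if_neg ha, ← mul_assoc, hx i a (Ne.symm ha), neg_mul, mul_assoc, hpast, pow_succ,
        mul_neg_one, neg_mul]

theorem prod_map_mul_prod_map_of_anticomm (hx : ∀ i j, i ≠ j → x i * x j = -(x j * x i))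
    (l₁ l₂ : List ι) :
    (l₁.map x).prod * (l₂.map x).prod =
      (-1) ^ (l₁.map fun i ↦ l₂.countP (· ≠ i)).sum * ((l₂.map x).prod * (l₁.map x).prod) := by
  induction l₁ with
  | nil => simp
  | cons a t ih =>
    set m := (t.map fun i ↦ l₂.countP (· ≠ i)).sum
    calc x a * (t.map x).prod * (l₂.map x).prod
        = x a * ((-1) ^ m * ((l₂.map x).prod * (t.map x).prod)) := by rw [mul_assoc, ih]
      _ = (-1) ^ m * (x a * (l₂.map x).prod * (t.map x).prod) := by
        rw [← mul_assoc, ← ((Commute.neg_one_left _).pow_left m).eq, mul_assoc, mul_assoc]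
      _ = (-1) ^ (l₂.countP (· ≠ a) + m) * ((l₂.map x).prod * (x a * (t.map x).prod)) := by
        rw [mul_prod_map_of_anticomm hx, add_comm, pow_add]
        simp only [mul_assoc]

end Anticommuting

namespace Finset

theorem sum_card_erase {ι : Type*} [DecidableEq ι] (s t : Finset ι) :
    ∑ i ∈ s, #(t.erase i) = #s * #t - #(s ∩ t) := by
  have hpoint (i : ι) : #(t.erase i) + (if i ∈ t then 1 else 0) = #t := by
    split_ifs with hi
    · exact card_erase_add_one hi
    · rw [erase_eq_of_notMem hi, add_zero]
  have h := sum_congr rfl fun i (_ : i ∈ s) ↦ hpoint i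
  rw [sum_add_distrib, sum_boole, Nat.cast_id, filter_mem_eq_inter, sum_const, smul_eq_mul] at h
  omega

variable {ι : Type*} [LinearOrder ι]

theorem countP_sort_ne (s : Finset ι) (i : ι) :
    (s.sort (· ≤ ·)).countP (· ≠ i) = #(s.erase i) := by
  rw [← Multiset.coe_countP, sort_eq, Multiset.countP_eq_card_filter, ← filter_val, filter_ne']
  rfl

theorem sum_map_sort {M : Type*} [AddCommMonoid M] (s : Finset ι) (f : ι → M) :
    ((s.sort (· ≤ ·)).map f).sum = ∑ i ∈ s, f i := by
  rw [← Multiset.sum_coe, ← Multiset.map_coe, sort_eq]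
  rfl

end Finset

/-- Sign rule for disentangling chords: for a family of pairwise anticommuting elements
`x i` of a ring and finite index sets `I`, `J`, writing `X_I` for the product of the `x i`
over `i ∈ I` in increasing order, we have
`X_I * X_J = (-1)^(|I|·|J| - |I ∩ J|) * (X_J * X_I)`. -/
theorem chord_disentangling_sign {A : Type*} [Ring A] {ι : Type*} [LinearOrder ι]
    (x : ι → A) (hx : ∀ i j, i ≠ j → x i * x j = -(x j * x i))
    (I J : Finset ι) :
    ((I.sort (· ≤ ·)).map x).prod * ((J.sort (· ≤ ·)).map x).prod =
      (-1 : A) ^ (I.card * J.card - (I ∩ J).card) *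
        (((J.sort (· ≤ ·)).map x).prod * ((I.sort (· ≤ ·)).map x).prod) := by
  rw [prod_map_mul_prod_map_of_anticomm hx, sum_map_sort]
  simp_rw [countP_sort_ne]
  rw [sum_card_erase]
end

section
/- Fix a real λ > 0 and a natural number m, and for each N set p_N = ⌊√(λ·N)⌋. Then the limit as N → ∞ of (p_N choose m) · (N − p_N choose p_N − m) / (N choose p_N) exists and equals (λ^m / m!) · e^(−λ). In other words, in the double scaling limit (N → ∞ with p_N² / N → λ) the overlap size of two uniformly random p_N-element subsets of an N-element set converges in distribution to a Poisson distribution with mean λ. -/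
/-!
With `k = p - m` and falling factorials `x^(j)`, the hypergeometric weight factors exactly as
`C(p,m) p^(m) / N^(m) · (N-p)^(k) / (N-m)^(k)`. The first factor is asymptotic to
`(p²/N)^m / m!`, hence tends to `λ^m / m!`. The second is `∏_{i<k} (1 - k/(N-m-i))`, squeezed
between `(1 - k/(N-p))^k` and `(1 - k/(N-m))^k`; both tend to `e^{-λ}` because `k²/N → λ` and
`k/N → 0`, via `y/(1+y) ≤ log(1+y) ≤ y`.
-/

open Filter Topology Asymptotics Finset

lemma tendsto_one_add_pow_exp_of_tendsto_mul {α : Type*} {l : Filter α} {k : α → ℕ}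
    {y : α → ℝ} {c : ℝ} (hy : Tendsto y l (𝓝 0))
    (hky : Tendsto (fun x => k x * y x) l (𝓝 c)) :
    Tendsto (fun x => (1 + y x) ^ k x) l (𝓝 (Real.exp c)) := by
  have hpos : ∀ᶠ x in l, 0 < 1 + y x := by
    filter_upwards [hy.eventually (lt_mem_nhds (show (-1 : ℝ) < 0 by norm_num))] with x hx
    linarith
  have hky_div : Tendsto (fun x => k x * y x / (1 + y x)) l (𝓝 c) := by
    have hden : Tendsto (fun x => 1 + y x) l (𝓝 1) := by
      simpa using tendsto_const_nhds.add hy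
    have h := hky.div hden one_ne_zero
    rw [div_one] at h
    exact h
  have hlog : Tendsto (fun x => k x * Real.log (1 + y x)) l (𝓝 c) := by
    refine tendsto_of_tendsto_of_tendsto_of_le_of_le' hky_div hky ?_ ?_
    · filter_upwards [hpos] with x hx
      have h := Real.one_sub_inv_le_log_of_pos hx
      rw [mul_div_assoc]
      gcongr
      rwa [show y x / (1 + y x) = 1 - (1 + y x)⁻¹ by field_simp; ring]
    · filter_upwards [hpos] with x hx
      gcongr
      linarith [Real.log_le_sub_one_of_pos hx]
  refine ((Real.continuous_exp.tendsto c).comp hlog).congr' ?_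
  filter_upwards [hpos] with x hx
  rw [Function.comp_apply, Real.exp_nat_mul, Real.exp_log hx]

lemma cast_choose_mul_choose_div_choose {N p m : ℕ} (hmp : m ≤ p) (hpN : p ≤ N) :
    (p.choose m : ℝ) * (N - p).choose (p - m) / N.choose p =
      p.choose m * p.descFactorial m / N.descFactorial m *
        ((N - m - (p - m)).descFactorial (p - m) / (N - m).descFactorial (p - m)) := by
  have hchoose_sub :
      ((N - p).descFactorial (p - m) : ℝ) = (p - m).factorial * (N - p).choose (p - m) :=
    mod_cast Nat.descFactorial_eq_factorial_mul_choose _ _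
  have hchoose : (N.descFactorial p : ℝ) = p.factorial * N.choose p :=
    mod_cast Nat.descFactorial_eq_factorial_mul_choose _ _
  have hsplit : ((N - m).descFactorial (p - m) * N.descFactorial m : ℝ) = N.descFactorial p :=
    mod_cast Nat.descFactorial_mul_descFactorial hmp
  have hfact : ((p - m).factorial * p.descFactorial m : ℝ) = p.factorial :=
    mod_cast Nat.factorial_mul_descFactorial hmp
  rw [show N - m - (p - m) = N - p by omega]
  have hN : (N.choose p : ℝ) ≠ 0 := by exact_mod_cast (Nat.choose_pos hpN).ne'
  have hm : (N.descFactorial m : ℝ) ≠ 0 := by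
    exact_mod_cast (Nat.descFactorial_pos.2 (hmp.trans hpN)).ne'
  have hk : ((N - m).descFactorial (p - m) : ℝ) ≠ 0 := by
    exact_mod_cast (Nat.descFactorial_pos.2 (by omega)).ne'
  field_simp
  linear_combination (p.choose m : ℝ) * (N - p).choose (p - m) * (hsplit + hchoose)
    - (p.choose m : ℝ) * (N - p).choose (p - m) * N.choose p * hfact
    - (p.choose m : ℝ) * N.choose p * p.descFactorial m * hchoose_sub

lemma cast_descFactorial_sub_div_eq_prod {n p k : ℕ} (h : p + k ≤ n) :
    ((n - p).descFactorial k : ℝ) / n.descFactorial k =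
      ∏ i ∈ range k, (1 - p / ((n - i : ℕ) : ℝ)) := by
  rw [Nat.descFactorial_eq_prod_range, Nat.descFactorial_eq_prod_range, Nat.cast_prod,
    Nat.cast_prod, ← prod_div_distrib]
  refine prod_congr rfl fun i hi => ?_
  have hi : i < k := mem_range.1 hi
  have hpos : (0 : ℝ) < ((n - i : ℕ) : ℝ) := by exact_mod_cast (by omega : 0 < n - i)
  rw [show n - p - i = n - i - p by omega, Nat.cast_sub (by omega : p ≤ n - i)]
  field_simp

lemma one_sub_div_pow_le_cast_descFactorial_sub_div {n p k : ℕ} (h : p + k ≤ n) :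
    (1 - p / ((n - k : ℕ) : ℝ)) ^ k ≤ ((n - p).descFactorial k : ℝ) / n.descFactorial k := by
  rw [cast_descFactorial_sub_div_eq_prod h]
  calc (1 - p / ((n - k : ℕ) : ℝ)) ^ k = ∏ _i ∈ range k, (1 - p / ((n - k : ℕ) : ℝ)) := by
        rw [prod_const, card_range]
    _ ≤ ∏ i ∈ range k, (1 - p / ((n - i : ℕ) : ℝ)) := by
        refine prod_le_prod (fun _ _ => ?_) fun i hi => ?_
        · rw [sub_nonneg]
          exact div_le_one_of_le₀ (by exact_mod_cast (by omega : p ≤ n - k)) (Nat.cast_nonneg _)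
        · rcases Nat.eq_zero_or_pos p with rfl | hp
          · simp
          have hi : i < k := mem_range.1 hi
          gcongr
          exact_mod_cast (by omega : 0 < n - k)

lemma cast_descFactorial_sub_div_le_one_sub_div_pow {n p k : ℕ} (h : p + k ≤ n) :
    ((n - p).descFactorial k : ℝ) / n.descFactorial k ≤ (1 - p / (n : ℝ)) ^ k := by
  rw [cast_descFactorial_sub_div_eq_prod h]
  calc ∏ i ∈ range k, (1 - p / ((n - i : ℕ) : ℝ)) ≤ ∏ _i ∈ range k, (1 - p / (n : ℝ)) := by
        refine prod_le_prod (fun i hi => ?_) fun i hi => ?_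
        · have hi : i < k := mem_range.1 hi
          rw [sub_nonneg]
          exact div_le_one_of_le₀ (by exact_mod_cast (by omega : p ≤ n - i)) (Nat.cast_nonneg _)
        · have hi : i < k := mem_range.1 hi
          gcongr
          · exact_mod_cast (by omega : 0 < n - i)
          · exact_mod_cast Nat.sub_le n i
    _ = (1 - p / (n : ℝ)) ^ k := by rw [prod_const, card_range]

lemma isEquivalent_cast_sub {α : Type*} {l : Filter α} {u a : α → ℕ}
    (h : (fun x => (a x : ℝ)) =o[l] fun x => (u x : ℝ)) :
    (fun x => ((u x - a x : ℕ) : ℝ)) ~[l] fun x => (u x : ℝ) := by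
  refine IsLittleO.isEquivalent (IsBigO.trans_isLittleO ?_ h)
  refine IsBigO.of_bound 1 (Eventually.of_forall fun x => ?_)
  rcases le_total (a x) (u x) with hau | hua
  · simp [Nat.cast_sub hau]
  · simp only [Pi.sub_apply, Nat.sub_eq_zero_of_le hua, Nat.cast_zero, zero_sub, norm_neg,
      Real.norm_natCast, one_mul]
    exact_mod_cast hua

lemma tendsto_cast_descFactorial_sub_div_descFactorial {α : Type*} {l : Filter α} {n k : α → ℕ}
    {c : ℝ} (hkn : (fun x => (k x : ℝ)) =o[l] fun x => (n x : ℝ))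
    (hc : Tendsto (fun x => (k x : ℝ) ^ 2 / n x) l (𝓝 c)) :
    Tendsto (fun x => ((n x - k x).descFactorial (k x) : ℝ) / (n x).descFactorial (k x)) l
      (𝓝 (Real.exp (-c))) := by
  have hpow : ∀ q : α → ℕ, (fun x => (q x : ℝ)) ~[l] (fun x => (n x : ℝ)) →
      Tendsto (fun x => (1 - k x / (q x : ℝ)) ^ k x) l (𝓝 (Real.exp (-c))) := by
    intro q hq
    have hdiv : (fun x => (k x : ℝ) / q x) ~[l] fun x => (k x : ℝ) / n x :=
      IsEquivalent.refl.div hq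
    have hy : Tendsto (fun x => -((k x : ℝ) / q x)) l (𝓝 0) := by
      simpa using (hdiv.tendsto_nhds_iff.2 hkn.tendsto_div_nhds_zero).neg
    have hky : Tendsto (fun x => k x * -((k x : ℝ) / q x)) l (𝓝 (-c)) := by
      have hmul : (fun x => (k x : ℝ) * (k x / q x)) ~[l] fun x => (k x : ℝ) * (k x / n x) :=
        IsEquivalent.refl.mul hdiv
      simpa only [mul_neg] using (hmul.tendsto_nhds_iff.2 (hc.congr fun x => by ring)).neg
    simpa only [sub_eq_add_neg] using tendsto_one_add_pow_exp_of_tendsto_mul hy hky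
  have hkk : ∀ᶠ x in l, k x + k x ≤ n x := by
    filter_upwards [hkn.bound (show (0 : ℝ) < 1 / 2 by norm_num)] with x hx
    simp only [Real.norm_natCast] at hx
    exact_mod_cast (by linarith : (k x + k x : ℝ) ≤ n x)
  refine tendsto_of_tendsto_of_tendsto_of_le_of_le' (hpow _ (isEquivalent_cast_sub hkn))
    (hpow n IsEquivalent.refl) ?_ ?_
  · filter_upwards [hkk] with x hx
    exact one_sub_div_pow_le_cast_descFactorial_sub_div hx
  · filter_upwards [hkk] with x hx
    exact cast_descFactorial_sub_div_le_one_sub_div_pow hx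

lemma tendsto_cast_choose_mul_descFactorial_div_descFactorial {α : Type*} {l : Filter α}
    {n p : α → ℕ} {c : ℝ} (hn : Tendsto n l atTop) (hp : Tendsto p l atTop)
    (hc : Tendsto (fun x => (p x : ℝ) ^ 2 / n x) l (𝓝 c)) (m : ℕ) :
    Tendsto (fun x => ((p x).choose m : ℝ) * (p x).descFactorial m / (n x).descFactorial m) l
      (𝓝 (c ^ m / m.factorial)) := by
  have hequiv : (fun x => ((p x).choose m : ℝ) * (p x).descFactorial m / (n x).descFactorial m)
      ~[l] fun x => ((p x : ℝ) ^ 2 / n x) ^ m / m.factorial := by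
    refine ((((isEquivalent_choose m).comp_tendsto hp).mul
      ((isEquivalent_descFactorial m).comp_tendsto hp)).div
      ((isEquivalent_descFactorial m).comp_tendsto hn)).congr_right (.of_eq ?_)
    ext x
    simp only [Function.comp_apply, Pi.mul_apply, Pi.div_apply]
    ring
  exact hequiv.tendsto_nhds_iff.2 ((hc.pow m).div_const _)

lemma isLittleO_of_tendsto_sq_div {α : Type*} {l : Filter α} {n p : α → ℕ} {c : ℝ}
    (hn : Tendsto n l atTop) (hp : Tendsto p l atTop)
    (hc : Tendsto (fun x => (p x : ℝ) ^ 2 / n x) l (𝓝 c)) :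
    (fun x => (p x : ℝ)) =o[l] fun x => (n x : ℝ) := by
  have hinv : Tendsto (fun x => (p x : ℝ)⁻¹) l (𝓝 0) :=
    tendsto_inv_atTop_zero.comp (tendsto_natCast_atTop_atTop.comp hp)
  refine (isLittleO_iff_tendsto' ?_).2 ?_
  · filter_upwards [hn.eventually_ne_atTop 0] with x hx h
    exact absurd h (by exact_mod_cast hx)
  · refine (mul_zero c ▸ hc.mul hinv).congr' ?_
    filter_upwards [hp.eventually_ne_atTop 0] with x hx
    have hx : (p x : ℝ) ≠ 0 := by exact_mod_cast hx
    field_simp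

theorem tendsto_cast_choose_mul_choose_div_choose {α : Type*} {l : Filter α} {n p : α → ℕ}
    {c : ℝ} (hn : Tendsto n l atTop) (hp : Tendsto p l atTop)
    (hc : Tendsto (fun x => (p x : ℝ) ^ 2 / n x) l (𝓝 c)) (m : ℕ) :
    Tendsto (fun x => ((p x).choose m : ℝ) * (n x - p x).choose (p x - m) / (n x).choose (p x)) l
      (𝓝 (c ^ m / m.factorial * Real.exp (-c))) := by
  have hpn := isLittleO_of_tendsto_sq_div hn hp hc
  have hsub : ∀ {u : α → ℕ}, Tendsto u l atTop →
      (fun x => ((u x - m : ℕ) : ℝ)) ~[l] fun x => (u x : ℝ) := fun hu =>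
    isEquivalent_cast_sub (isLittleO_const_left.2 <| .inr <|
      tendsto_norm_atTop_atTop.comp (tendsto_natCast_atTop_atTop.comp hu))
  have hdesc := tendsto_cast_descFactorial_sub_div_descFactorial
    ((hsub hp).isBigO.trans_isLittleO (hpn.trans_isBigO (hsub hn).symm.isBigO))
    ((((hsub hp).pow 2).div (hsub hn)).tendsto_nhds_iff.2 hc)
  refine ((tendsto_cast_choose_mul_descFactorial_div_descFactorial hn hp hc m).mul hdesc).congr' ?_
  filter_upwards [hp.eventually_ge_atTop m, hpn.bound one_pos] with x hmp hpn
  simp only [Real.norm_natCast, one_mul, Nat.cast_le] at hpn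
  exact (cast_choose_mul_choose_div_choose hmp hpn).symm

lemma tendsto_floor_sqrt_mul_sq_div {lam : ℝ} (hlam : 0 < lam) :
    Tendsto (fun N : ℕ => (⌊√(lam * N)⌋₊ : ℝ) ^ 2 / N) atTop (𝓝 lam) := by
  have hs : Tendsto (fun N : ℕ => √(lam * N)) atTop atTop :=
    Real.tendsto_sqrt_atTop.comp (tendsto_natCast_atTop_atTop.const_mul_atTop hlam)
  have h := ((tendsto_nat_floor_div_atTop.comp hs).pow 2).mul_const lam
  rw [one_pow, one_mul] at h
  refine h.congr' ?_
  filter_upwards [eventually_ne_atTop 0] with N hN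
  have hN : (0 : ℝ) < lam * N := by positivity
  simp only [Function.comp_apply, div_pow, Real.sq_sqrt hN.le]
  field_simp

/-- Double scaling limit: with `p_N = ⌊√(λN)⌋`, the probability
`(p_N choose m)(N − p_N choose p_N − m)/(N choose p_N)` that two uniformly random
`p_N`-subsets of an `N`-set have overlap `m` tends to the Poisson weight
`(λ^m/m!)·e^(−λ)` as `N → ∞`. -/
theorem overlap_poisson_limit (lam : ℝ) (hlam : 0 < lam) (m : ℕ) :
    Filter.Tendsto
      (fun N : ℕ =>
        (((⌊Real.sqrt (lam * N)⌋₊).choose m : ℝ) *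
            ((N - ⌊Real.sqrt (lam * N)⌋₊).choose (⌊Real.sqrt (lam * N)⌋₊ - m) : ℝ)) /
          (N.choose ⌊Real.sqrt (lam * N)⌋₊ : ℝ))
      Filter.atTop
      (nhds (lam ^ m / (Nat.factorial m : ℝ) * Real.exp (-lam))) :=
  tendsto_cast_choose_mul_choose_div_choose tendsto_id
    (tendsto_nat_floor_atTop.comp <| Real.tendsto_sqrt_atTop.comp <|
      tendsto_natCast_atTop_atTop.const_mul_atTop hlam)
    (tendsto_floor_sqrt_mul_sq_div hlam) m
end

section
/- Fix reals α > 0 and β > 0 and a natural number m. For each N set p_N = ⌊√(α·N)⌋ and r_N = ⌊√(β·N)⌋. Then the limit as N → ∞ of (p_N choose m) · (N − p_N choose r_N − m) / (N choose r_N) exists and equals ((√(αβ))^m / m!) · e^(−√(αβ)). That is, the overlap of a random r_N-subset with a fixed p_N-subset of an N-element set is asymptotically Poisson with mean λ_{IJ} = √(αβ) = lim p_N r_N / N. -/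
/-!
Write `(x)_k` for the falling factorial. For `m ≤ p`, `m ≤ r`, `p + r ≤ N` the overlap probability
factors as `C(p, m) (r)_m / (N)_m` times `(N - r)_(p - m) / (N - m)_(p - m)`. The first factor is
asymptotic to `(p r / N)^m / m!`. The second is a product of `p - m` factors
`1 - (r - m) / (N - m - j)`, squeezed between `(1 - (r - m) / (N - p + 1))^(p - m)` and
`(1 - (r - m) / (N - m))^(p - m)`; both bounds tend to `exp (-λ)` because `(p - m) (r - m)` is
asymptotic to `λ N`, where `λ = lim p r / N`. Finally `⌊√(αN)⌋ ⌊√(βN)⌋ / N → √(αβ)`.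
-/

open Filter Topology Asymptotics Finset
open scoped Nat

theorem tendsto_one_sub_pow_exp_of_tendsto_mul {α : Type*} {l : Filter α} {k : α → ℕ}
    {u : α → ℝ} {c : ℝ} (hk : Tendsto k l atTop) (hku : Tendsto (fun x ↦ k x * u x) l (𝓝 c)) :
    Tendsto (fun x ↦ (1 - u x) ^ k x) l (𝓝 (Real.exp (-c))) := by
  have hk' : Tendsto (fun x ↦ (k x : ℝ)) l atTop := tendsto_natCast_atTop_atTop.comp hk
  have hu : Tendsto u l (𝓝 0) := by
    have := hku.mul (tendsto_inv_atTop_zero.comp hk')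
    rw [mul_zero] at this
    refine this.congr' ?_
    filter_upwards [hk'.eventually_gt_atTop 0] with x hx
    simp only [Function.comp_apply]
    field_simp
  have hu1 : ∀ᶠ x in l, 0 < 1 - u x := by
    filter_upwards [hu.eventually (eventually_lt_nhds one_pos)] with x hx
    linarith
  -- `-u / (1 - u) ≤ log (1 - u) ≤ -u`
  have hlog : Tendsto (fun x ↦ k x * Real.log (1 - u x)) l (𝓝 (-c)) := by
    have hlower : Tendsto (fun x ↦ -(k x * u x) / (1 - u x)) l (𝓝 (-c)) := by
      have h1 : Tendsto (fun x ↦ 1 - u x) l (𝓝 1) := by simpa using tendsto_const_nhds.sub hu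
      have := hku.neg.div h1 one_ne_zero
      rwa [div_one] at this
    refine tendsto_of_tendsto_of_tendsto_of_le_of_le' hlower hku.neg ?_ ?_
    · filter_upwards [hu1] with x hx
      have h := mul_le_mul_of_nonneg_left (Real.one_sub_inv_le_log_of_pos hx) (k x).cast_nonneg
      calc -(k x * u x) / (1 - u x) = k x * (1 - (1 - u x)⁻¹) := by field_simp; ring
        _ ≤ _ := h
    · filter_upwards [hu1] with x hx
      have h := mul_le_mul_of_nonneg_left (Real.log_le_sub_one_of_pos hx) (k x).cast_nonneg
      linarith
  refine ((Real.continuous_exp.tendsto _).comp hlog).congr' ?_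
  filter_upwards [hu1] with x hx
  simp [Real.exp_nat_mul, Real.exp_log hx]

theorem Nat.cast_descFactorial_eq_prod_range {R : Type*} [CommRing R] (n k : ℕ) :
    (n.descFactorial k : R) = ∏ j ∈ range k, ((n : R) - j) := by
  rw [← descPochhammer_eval_eq_descFactorial, descPochhammer_eval_eq_prod_range]

theorem Nat.cast_descFactorial_eq_div {K : Type*} [Field K] [CharZero K] {n k : ℕ}
    (h : k ≤ n) : (n.descFactorial k : K) = n ! / (n - k)! := by
  rw [eq_div_iff (Nat.cast_ne_zero.mpr (Nat.factorial_ne_zero _)), ← Nat.cast_mul, mul_comm,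
    Nat.factorial_mul_descFactorial h]

theorem descFactorial_div_descFactorial_add_eq_prod {a d k : ℕ} (hk : k ≤ a + d) :
    (a.descFactorial k : ℝ) / (a + d).descFactorial k =
      ∏ j ∈ range k, (1 - (d : ℝ) / (a + d - j)) := by
  rw [Nat.cast_descFactorial_eq_prod_range, Nat.cast_descFactorial_eq_prod_range,
    ← prod_div_distrib]
  refine prod_congr rfl fun j hj ↦ ?_
  have hj : (j : ℝ) < a + d := by exact_mod_cast (mem_range.mp hj).trans_le hk
  rw [one_sub_div (by linarith)]
  push_cast
  ring

theorem one_sub_div_pow_le_descFactorial_div_descFactorial_add {a d k : ℕ} (hk : k ≤ a) :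
    (1 - (d : ℝ) / (a + d + 1 - k)) ^ k ≤ (a.descFactorial k : ℝ) / (a + d).descFactorial k := by
  rw [descFactorial_div_descFactorial_add_eq_prod (hk.trans (Nat.le_add_right a d))]
  have hka : (k : ℝ) ≤ a := by exact_mod_cast hk
  calc (1 - (d : ℝ) / (a + d + 1 - k)) ^ k
      _ = ∏ _j ∈ range k, (1 - (d : ℝ) / (a + d + 1 - k)) := by simp
      _ ≤ _ := prod_le_prod (fun _ _ ↦ ?_) fun j hj ↦ ?_
  · rw [sub_nonneg, div_le_one (by linarith)]
    linarith
  · have hj : (j : ℝ) + 1 ≤ k := by exact_mod_cast mem_range.mp hj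
    exact sub_le_sub_left (div_le_div_of_nonneg_left d.cast_nonneg (by linarith) (by linarith)) 1

theorem descFactorial_div_descFactorial_add_le_one_sub_div_pow {a d k : ℕ} (hk : k ≤ a) :
    (a.descFactorial k : ℝ) / (a + d).descFactorial k ≤ (1 - (d : ℝ) / (a + d)) ^ k := by
  rw [descFactorial_div_descFactorial_add_eq_prod (hk.trans (Nat.le_add_right a d))]
  calc _ ≤ ∏ _j ∈ range k, (1 - (d : ℝ) / (a + d)) := prod_le_prod (fun j hj ↦ ?_) fun j hj ↦ ?_
    _ = _ := by simp
  · have hj : (j : ℝ) < a := by exact_mod_cast (mem_range.mp hj).trans_le hk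
    rw [sub_nonneg, div_le_one (by linarith)]
    linarith
  · have hj : (j : ℝ) < a := by exact_mod_cast (mem_range.mp hj).trans_le hk
    gcongr
    · linarith
    · linarith

theorem choose_sub_div_choose_eq {N p r m : ℕ} (hmp : m ≤ p) (hmr : m ≤ r) (hN : p + r ≤ N + m) :
    ((N - p).choose (r - m) : ℝ) / N.choose r =
      (r.descFactorial m : ℝ) / N.descFactorial m *
        ((N - r).descFactorial (p - m) / (N - m).descFactorial (p - m)) := by
  rw [Nat.cast_choose ℝ (by omega : r - m ≤ N - p), Nat.cast_choose ℝ (by omega : r ≤ N),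
    Nat.cast_descFactorial_eq_div hmr, Nat.cast_descFactorial_eq_div (by omega : m ≤ N),
    Nat.cast_descFactorial_eq_div (by omega : p - m ≤ N - r),
    Nat.cast_descFactorial_eq_div (by omega : p - m ≤ N - m),
    show N - m - (p - m) = N - p by omega, show N - r - (p - m) = N - p - (r - m) by omega]
  field_simp

theorem isEquivalent_sub_const {α : Type*} {l : Filter α} {x : α → ℝ} (hx : Tendsto x l atTop)
    (c : ℝ) : (fun a ↦ x a - c) ~[l] x :=
  IsEquivalent.refl.sub_isLittleO ((isLittleO_const_id_atTop c).comp_tendsto hx)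

theorem tendsto_descFactorial_div_descFactorial_add {α : Type*} {l : Filter α} {a d k : α → ℕ}
    {c : ℝ} (hk : Tendsto k l atTop) (hka : ∀ᶠ x in l, k x ≤ a x)
    (hupper : Tendsto (fun x ↦ (k x : ℝ) * (d x / (a x + d x))) l (𝓝 c))
    (hlower : Tendsto (fun x ↦ (k x : ℝ) * (d x / (a x + d x + 1 - k x))) l (𝓝 c)) :
    Tendsto (fun x ↦ ((a x).descFactorial (k x) : ℝ) / (a x + d x).descFactorial (k x)) l
      (𝓝 (Real.exp (-c))) :=
  tendsto_of_tendsto_of_tendsto_of_le_of_le'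
    (tendsto_one_sub_pow_exp_of_tendsto_mul hk hlower)
    (tendsto_one_sub_pow_exp_of_tendsto_mul hk hupper)
    (hka.mono fun _ ↦ one_sub_div_pow_le_descFactorial_div_descFactorial_add)
    (hka.mono fun _ ↦ descFactorial_div_descFactorial_add_le_one_sub_div_pow)

section DoubleScaling

variable {p r : ℕ → ℕ} {c : ℝ}

theorem isLittleO_of_tendsto_mul_div (hr : Tendsto r atTop atTop)
    (hpr : Tendsto (fun N ↦ (p N : ℝ) * r N / N) atTop (𝓝 c)) :
    (fun N ↦ (p N : ℝ)) =o[atTop] (fun N ↦ (N : ℝ)) := by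
  have hr' : Tendsto (fun N ↦ (r N : ℝ)) atTop atTop := tendsto_natCast_atTop_atTop.comp hr
  rw [isLittleO_iff_tendsto' (by filter_upwards [eventually_gt_atTop 0] with N hN h; simp_all)]
  have := hpr.mul (tendsto_inv_atTop_zero.comp hr')
  rw [mul_zero] at this
  refine this.congr' ?_
  filter_upwards [hr'.eventually_gt_atTop 0] with N hN
  simp only [Function.comp_apply]
  field_simp

theorem eventually_le_and_add_le (hp : Tendsto p atTop atTop) (hr : Tendsto r atTop atTop)
    (hpr : Tendsto (fun N ↦ (p N : ℝ) * r N / N) atTop (𝓝 c)) (m : ℕ) :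
    ∀ᶠ N in atTop, m ≤ p N ∧ m ≤ r N ∧ p N + r N ≤ N := by
  have hrp : Tendsto (fun N ↦ (r N : ℝ) * p N / N) atTop (𝓝 c) := by
    simpa only [mul_comm] using hpr
  filter_upwards [hp.eventually_ge_atTop m, hr.eventually_ge_atTop m,
    (isLittleO_of_tendsto_mul_div hr hpr).bound (by norm_num : (0 : ℝ) < 1 / 2),
    (isLittleO_of_tendsto_mul_div hp hrp).bound (by norm_num : (0 : ℝ) < 1 / 2)]
    with N hmp hmr hpN hrN
  refine ⟨hmp, hmr, ?_⟩
  simp only [Real.norm_natCast] at hpN hrN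
  exact_mod_cast (by linarith : (p N : ℝ) + r N ≤ N)

theorem tendsto_choose_mul_descFactorial_div_descFactorial (hp : Tendsto p atTop atTop)
    (hr : Tendsto r atTop atTop) (hpr : Tendsto (fun N ↦ (p N : ℝ) * r N / N) atTop (𝓝 c))
    (m : ℕ) :
    Tendsto (fun N ↦ ((p N).choose m : ℝ) * (r N).descFactorial m / N.descFactorial m) atTop
      (𝓝 (c ^ m / m !)) := by
  have hequiv : (fun N ↦ ((p N).choose m : ℝ) * (r N).descFactorial m / N.descFactorial m)
      ~[atTop] fun N ↦ (p N : ℝ) ^ m / m ! * (r N : ℝ) ^ m / (N : ℝ) ^ m :=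
    (((isEquivalent_choose m).comp_tendsto hp).mul
      ((isEquivalent_descFactorial m).comp_tendsto hr)).div (isEquivalent_descFactorial m)
  refine hequiv.symm.tendsto_nhds ((hpr.pow m).div_const (m ! : ℝ) |>.congr fun N ↦ ?_)
  ring

theorem tendsto_descFactorial_div_descFactorial_exp (hp : Tendsto p atTop atTop)
    (hr : Tendsto r atTop atTop) (hpr : Tendsto (fun N ↦ (p N : ℝ) * r N / N) atTop (𝓝 c))
    (m : ℕ) :
    Tendsto (fun N ↦ ((N - r N).descFactorial (p N - m) : ℝ) / (N - m).descFactorial (p N - m))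
      atTop (𝓝 (Real.exp (-c))) := by
  have hev := eventually_le_and_add_le hp hr hpr m
  have hp' : Tendsto (fun N ↦ (p N : ℝ)) atTop atTop := tendsto_natCast_atTop_atTop.comp hp
  have hr' : Tendsto (fun N ↦ (r N : ℝ)) atTop atTop := tendsto_natCast_atTop_atTop.comp hr
  have hratio {D : ℕ → ℝ} (hD : D ~[atTop] fun N ↦ (N : ℝ)) :
      Tendsto (fun N ↦ ((p N : ℝ) - m) * ((r N : ℝ) - m) / D N) atTop (𝓝 c) :=
    (((isEquivalent_sub_const hp' m).mul (isEquivalent_sub_const hr' m)).div hD).symm.tendsto_nhds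
      hpr
  have hupper := hratio (isEquivalent_sub_const tendsto_natCast_atTop_atTop m)
  have hlower := hratio (D := fun N ↦ (N : ℝ) - (p N - 1))
    (IsEquivalent.refl.sub_isLittleO
      ((isEquivalent_sub_const hp' 1).trans_isLittleO (isLittleO_of_tendsto_mul_div hr hpr)))
  refine (tendsto_descFactorial_div_descFactorial_add (a := fun N ↦ N - r N)
    (d := fun N ↦ r N - m) (k := fun N ↦ p N - m) ((tendsto_sub_atTop_nat m).comp hp) ?_
    (hupper.congr' ?_) (hlower.congr' ?_)).congr' ?_
  all_goals filter_upwards [hev] with N ⟨hmp, hmr, hN⟩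
  · omega
  · push_cast [Nat.cast_sub hmp, Nat.cast_sub hmr, Nat.cast_sub (le_of_add_le_right hN)]
    ring
  · push_cast [Nat.cast_sub hmp, Nat.cast_sub hmr, Nat.cast_sub (le_of_add_le_right hN)]
    ring
  · rw [show N - r N + (r N - m) = N - m by omega]

theorem tendsto_choose_mul_choose_div_choose (hp : Tendsto p atTop atTop)
    (hr : Tendsto r atTop atTop) (hpr : Tendsto (fun N ↦ (p N : ℝ) * r N / N) atTop (𝓝 c))
    (m : ℕ) :
    Tendsto (fun N ↦ ((p N).choose m : ℝ) * (N - p N).choose (r N - m) / N.choose (r N)) atTop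
      (𝓝 (c ^ m / m ! * Real.exp (-c))) := by
  refine ((tendsto_choose_mul_descFactorial_div_descFactorial hp hr hpr m).mul
    (tendsto_descFactorial_div_descFactorial_exp hp hr hpr m)).congr' ?_
  filter_upwards [eventually_le_and_add_le hp hr hpr m] with N ⟨hmp, hmr, hN⟩
  simp only [mul_div_assoc]
  rw [choose_sub_div_choose_eq hmp hmr (by omega)]
  ring

end DoubleScaling

theorem tendsto_natFloor_sqrt_mul_atTop {a : ℝ} (ha : 0 < a) :
    Tendsto (fun N : ℕ ↦ ⌊Real.sqrt (a * N)⌋₊) atTop atTop :=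
  tendsto_nat_floor_atTop.comp <| Real.tendsto_sqrt_atTop.comp <|
    tendsto_natCast_atTop_atTop.const_mul_atTop ha

theorem tendsto_natFloor_sqrt_mul_mul_div {a b : ℝ} (ha : 0 < a) (hb : 0 < b) :
    Tendsto (fun N : ℕ ↦ (⌊Real.sqrt (a * N)⌋₊ : ℝ) * ⌊Real.sqrt (b * N)⌋₊ / N) atTop
      (𝓝 (Real.sqrt (a * b))) := by
  have hfloor {a : ℝ} (ha : 0 < a) :
      (fun N : ℕ ↦ (⌊Real.sqrt (a * N)⌋₊ : ℝ)) ~[atTop] fun N ↦ Real.sqrt (a * N) :=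
    isEquivalent_nat_floor.comp_tendsto <| Real.tendsto_sqrt_atTop.comp <|
      tendsto_natCast_atTop_atTop.const_mul_atTop ha
  refine (((hfloor ha).mul (hfloor hb)).div IsEquivalent.refl).symm.tendsto_nhds
    (tendsto_const_nhds.congr' ?_)
  filter_upwards [eventually_gt_atTop 0] with N hN
  have hN' : (0 : ℝ) < N := by exact_mod_cast hN
  simp only [Pi.mul_apply, Pi.div_apply]
  rw [← Real.sqrt_mul (by positivity), show a * N * (b * N) = a * b * N ^ 2 by ring,
    Real.sqrt_mul' (a * b) (sq_nonneg (N : ℝ)), Real.sqrt_sq hN'.le]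
  field_simp

/-- Generalized double scaling limit: with `p_N = ⌊√(αN)⌋` and `r_N = ⌊√(βN)⌋`, the
probability `(p_N choose m)(N − p_N choose r_N − m)/(N choose r_N)` that a uniformly
random `r_N`-subset of an `N`-set overlaps a fixed `p_N`-subset in exactly `m` elements
tends to the Poisson weight `((√(αβ))^m/m!)·e^(−√(αβ))` as `N → ∞`. -/
theorem overlap_poisson_limit_general (a b : ℝ) (ha : 0 < a) (hb : 0 < b) (m : ℕ) :
    Filter.Tendsto
      (fun N : ℕ =>
        (((⌊Real.sqrt (a * N)⌋₊).choose m : ℝ) *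
            ((N - ⌊Real.sqrt (a * N)⌋₊).choose (⌊Real.sqrt (b * N)⌋₊ - m) : ℝ)) /
          (N.choose ⌊Real.sqrt (b * N)⌋₊ : ℝ))
      Filter.atTop
      (nhds (Real.sqrt (a * b) ^ m / (Nat.factorial m : ℝ) *
        Real.exp (-Real.sqrt (a * b)))) :=
  tendsto_choose_mul_choose_div_choose (tendsto_natFloor_sqrt_mul_atTop ha)
    (tendsto_natFloor_sqrt_mul_atTop hb) (tendsto_natFloor_sqrt_mul_mul_div ha hb) m
end

section
/- Fix reals q and q_N and define η_l = Σ_{j=0}^{l} q^j · q_N^{l−j} for each natural number l. Let T be the linear endomorphism of the space of finitely supported real-valued functions on ℕ determined on basis vectors δ_l by T(δ_l) = δ_{l+1} + η_{l−1}·δ_{l−1} for l ≥ 1 and T(δ_0) = δ_1 (equivalently, (T v)(l) = v(l−1) + η_l · v(l+1), with v(−1) := 0). Then for every natural number n, Σ_{π} q^(cr(π)) · q_N^(ne(π)) = (T^(2n) δ_0)(0), where the sum ranges over all perfect matchings π of {1, …, 2n}. In particular for perfect matchings of an odd number of points the corresponding entry (T^(2n+1) δ_0)(0) vanishes. -/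
/-- A perfect matching of `Fin N`: chords recorded as pairs `(a, b)` with `a < b`,
every point lying on exactly one chord. -/
def IsChordDiagram {N : ℕ} (M : Finset (Fin N × Fin N)) : Prop :=
  (∀ e ∈ M, e.1 < e.2) ∧ ∀ x : Fin N, ∃! e, e ∈ M ∧ (x = e.1 ∨ x = e.2)

/-- Number of crossing pairs of chords: `a < c < b < d`. -/
def crossings {N : ℕ} (M : Finset (Fin N × Fin N)) : ℕ :=
  ((M ×ˢ M).filter fun p => p.1.1 < p.2.1 ∧ p.2.1 < p.1.2 ∧ p.1.2 < p.2.2).card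

/-- Number of nested pairs of chords: `a < c < d < b`. -/
def nestings {N : ℕ} (M : Finset (Fin N × Fin N)) : ℕ :=
  ((M ×ˢ M).filter fun p => p.1.1 < p.2.1 ∧ p.2.2 < p.1.2).card

/-- `η_l = Σ_{j=0}^{l} q^j q_N^(l−j)`. -/
def eta (q qN : ℝ) (l : ℕ) : ℝ := ∑ j ∈ Finset.range (l + 1), q ^ j * qN ^ (l - j)

/-- The transfer matrix, acting on coordinates by
`(T v)(l) = v(l−1) + η_l·v(l+1)` with `v(−1) := 0`;
equivalently `T δ_l = δ_{l+1} + η_{l−1} δ_{l−1}` on basis vectors. -/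
def transfer (q qN : ℝ) (v : ℕ → ℝ) : ℕ → ℝ :=
  fun l => (if l = 0 then 0 else v (l - 1)) + eta q qN l * v (l + 1)

/-- The basis vector `δ_0`. -/
def delta0 : ℕ → ℝ := fun l => if l = 0 then 1 else 0

open scoped Classical

/-!
Read the points from left to right. After `k` points a chord diagram leaves a partial matching
of `{0, …, k-1}`; its unmatched ("open") points are left ends of chords that close later.
Charge each crossing or nesting pair to the chord that closes first: then the weight of the
partial matching is already final. The next point either opens, or closes one of the `l + 1`
open points; closing the one with `j` open points to its right creates `j` crossings and
`l - j` nestings, and the factors `q ^ j * qN ^ (l - j)` add up to `η_l`. Hence the weighted count of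
partial matchings of `{0, …, k-1}` with `l` open points is `(T^k δ₀)(l)`.
-/

open Finset

lemma eta_zero (q qN : ℝ) : eta q qN 0 = 1 := by simp [eta]

lemma eta_succ (q qN : ℝ) (l : ℕ) : eta q qN (l + 1) = q * eta q qN l + qN ^ (l + 1) := by
  rw [eta, sum_range_succ', eta, mul_sum]
  congr 1
  · refine sum_congr rfl fun j _ => ?_
    rw [Nat.add_sub_add_right, pow_succ]
    ring
  · simp

lemma Finset.card_filter_insert_of_notMem {α : Type*} [DecidableEq α] {p : α → Prop}
    [DecidablePred p] {a : α} {s : Finset α} (ha : a ∉ s) :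
    #{x ∈ insert a s | p x} = #{x ∈ s | p x} + if p a then 1 else 0 := by
  rw [card_filter, card_filter, sum_insert ha, add_comm]

lemma eta_eq_sum_pow_card_filter {α : Type*} [LinearOrder α] (q qN : ℝ) {l : ℕ} {O : Finset α}
    (hO : #O = l + 1) :
    eta q qN l = ∑ c ∈ O, q ^ #{o ∈ O | c < o} * qN ^ #{o ∈ O | o < c} := by
  induction O using Finset.induction_on_max generalizing l with
  | empty => simp at hO
  | insert a s ha ih =>
    have has : a ∉ s := fun h => lt_irrefl a (ha a h)
    rw [card_insert_of_notMem has, add_left_inj] at hO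
    have hterm : ∀ c ∈ s, q ^ #{o ∈ insert a s | c < o} * qN ^ #{o ∈ insert a s | o < c} =
        q * (q ^ #{o ∈ s | c < o} * qN ^ #{o ∈ s | o < c}) := by
      intro c hc
      rw [card_filter_insert_of_notMem has, card_filter_insert_of_notMem has,
        if_pos (ha c hc), if_neg (ha c hc).asymm, pow_succ]
      ring
    have hnone_above : #{o ∈ s | a < o} = 0 :=
      card_eq_zero.2 (filter_eq_empty_iff.2 fun o ho => (ha o ho).asymm)
    have hall_below : #{o ∈ s | o < a} = #s := congrArg card (filter_true_of_mem ha)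
    rw [sum_insert has, sum_congr rfl hterm, ← mul_sum, card_filter_insert_of_notMem has,
      card_filter_insert_of_notMem has, hnone_above, hall_below, hO]
    rcases l with _ | m
    · simp [card_eq_zero.1 hO, eta_zero]
    · rw [← ih hO, eta_succ]
      simp only [lt_irrefl, if_false, add_zero, pow_zero, one_mul]
      ring

lemma iterate_transfer_delta0_of_odd (q qN : ℝ) {k l : ℕ} (h : Odd (k + l)) :
    (transfer q qN)^[k] delta0 l = 0 := by
  induction k generalizing l with
  | zero =>
    rw [zero_add] at h
    exact if_neg (by rintro rfl; simp at h)
  | succ k ih =>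
    rw [Function.iterate_succ_apply', transfer, ih (l := l + 1) (by convert h using 1; omega),
      mul_zero, add_zero]
    split_ifs
    · rfl
    · exact ih (by obtain ⟨m, hm⟩ := h; exact ⟨m - 1, by omega⟩)

namespace ChordDiagram

section PartialMatching

def ends (C : Finset (ℕ × ℕ)) : Finset ℕ := C.biUnion fun e => {e.1, e.2}

@[simp]
lemma mem_ends {C : Finset (ℕ × ℕ)} {x : ℕ} : x ∈ ends C ↔ ∃ e ∈ C, x = e.1 ∨ x = e.2 := by
  simp [ends]

lemma ends_insert (e : ℕ × ℕ) (C : Finset (ℕ × ℕ)) :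
    ends (insert e C) = insert e.1 (insert e.2 (ends C)) := by
  simp [ends, insert_union]

def IsPartialMatching (k : ℕ) (C : Finset (ℕ × ℕ)) : Prop :=
  (∀ e ∈ C, e.1 < e.2 ∧ e.2 < k) ∧
    (C : Set (ℕ × ℕ)).PairwiseDisjoint fun e => ({e.1, e.2} : Finset ℕ)

def openPoints (k : ℕ) (C : Finset (ℕ × ℕ)) : Finset ℕ := range k \ ends C

noncomputable def partialMatchings (k : ℕ) : Finset (Finset (ℕ × ℕ)) :=
  (range k ×ˢ range k).powerset.filter (IsPartialMatching k)

variable {k : ℕ} {C : Finset (ℕ × ℕ)}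

@[simp]
lemma mem_openPoints {x : ℕ} : x ∈ openPoints k C ↔ x < k ∧ x ∉ ends C := by
  simp [openPoints]

lemma mem_partialMatchings : C ∈ partialMatchings k ↔ IsPartialMatching k C := by
  refine mem_filter.trans ⟨And.right, fun h => ⟨mem_powerset.2 fun e he => ?_, h⟩⟩
  have := h.1 e he
  simp only [mem_product, mem_range]
  omega

lemma IsPartialMatching.eq_of_mem {e f : ℕ × ℕ} (hC : IsPartialMatching k C) (he : e ∈ C)
    (hf : f ∈ C) {x : ℕ} (hxe : x = e.1 ∨ x = e.2) (hxf : x = f.1 ∨ x = f.2) : e = f := by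
  by_contra hne
  exact Finset.disjoint_left.1 (hC.2 he hf hne) (by simpa using hxe) (by simpa using hxf)

lemma IsPartialMatching.lt_of_mem_ends (hC : IsPartialMatching k C) {x : ℕ} (hx : x ∈ ends C) :
    x < k := by
  obtain ⟨e, he, hx⟩ := mem_ends.1 hx
  have := hC.1 e he
  omega

lemma isPartialMatching_succ_iff (hk : k ∉ ends C) :
    IsPartialMatching (k + 1) C ↔ IsPartialMatching k C := by
  refine and_congr_left fun _ => forall₂_congr fun e he => ?_
  have : e.2 ≠ k := fun h => hk (mem_ends.2 ⟨e, he, Or.inr h.symm⟩)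
  omega

lemma IsPartialMatching.insert {c : ℕ} (hC : IsPartialMatching k C) (hc : c ∈ openPoints k C) :
    IsPartialMatching (k + 1) (insert (c, k) C) := by
  simp only [mem_openPoints, mem_ends, not_exists, not_and, not_or] at hc
  refine ⟨?_, ?_⟩
  · simp only [mem_insert, forall_eq_or_imp]
    exact ⟨⟨hc.1, k.lt_succ_self⟩, fun e he => (hC.1 e he).imp_right Nat.lt_succ_of_lt⟩
  · rw [coe_insert]
    refine hC.2.insert fun f hf _ => Finset.disjoint_left.2 fun x hx hx' => ?_
    have := hC.1 f hf
    have := hc.2 f hf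
    simp only [mem_insert, mem_singleton] at hx hx'
    omega

lemma IsPartialMatching.erase {e : ℕ × ℕ} (hC : IsPartialMatching (k + 1) C) (he : e ∈ C)
    (hek : e.2 = k) : IsPartialMatching k (C.erase e) ∧ e.1 ∈ openPoints k (C.erase e) := by
  have hne : ∀ f ∈ C.erase e, ∀ x, (x = e.1 ∨ x = e.2) → x ≠ f.1 ∧ x ≠ f.2 := by
    intro f hf x hx
    have := mt (hC.eq_of_mem (x := x) (mem_of_mem_erase hf) he · hx) (ne_of_mem_erase hf)
    tauto
  refine ⟨⟨fun f hf => ?_, hC.2.subset (by simp)⟩, ?_⟩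
  · have := hC.1 f (mem_of_mem_erase hf)
    have := (hne f hf k (Or.inr hek.symm)).2
    omega
  · simp only [mem_openPoints, mem_ends, not_exists, not_and, not_or]
    have := hC.1 e he
    exact ⟨by omega, fun f hf => hne f hf e.1 (Or.inl rfl)⟩

lemma openPoints_succ (hk : k ∉ ends C) : openPoints (k + 1) C = insert k (openPoints k C) := by
  ext x
  by_cases hx : x = k
  · simp [hx, hk]
  · simp only [mem_openPoints, mem_insert, hx, false_or]
    exact and_congr_left fun _ => by omega

lemma openPoints_succ_insert (c : ℕ) :
    openPoints (k + 1) (insert (c, k) C) = (openPoints k C).erase c := by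
  ext x
  simp only [mem_openPoints, ends_insert, mem_insert, mem_erase, not_or]
  by_cases hx : x ∈ ends C
  · simp [hx]
  · simp only [hx, not_false_eq_true, and_true]
    omega

lemma partialMatchings_zero : partialMatchings 0 = {∅} := by
  ext C
  simp only [mem_partialMatchings, mem_singleton]
  refine ⟨fun h => eq_empty_of_forall_notMem fun e he => Nat.not_lt_zero _ (h.1 e he).2, ?_⟩
  rintro rfl
  simp [IsPartialMatching]

lemma sum_partialMatchings_succ {M : Type*} [AddCommMonoid M] (F : Finset (ℕ × ℕ) → M) :
    ∑ C ∈ partialMatchings (k + 1), F C =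
      ∑ C ∈ partialMatchings k, (F C + ∑ c ∈ openPoints k C, F (insert (c, k) C)) := by
  rw [← sum_filter_not_add_sum_filter _ (k ∈ ends ·), sum_add_distrib, sum_sigma']
  congr 1
  · refine sum_congr (ext fun C => ?_) fun _ _ => rfl
    simp only [mem_filter, mem_partialMatchings]
    refine ⟨fun h => (isPartialMatching_succ_iff h.2).1 h.1, fun h => ?_⟩
    have hk : k ∉ ends C := fun hk => (h.lt_of_mem_ends hk).false
    exact ⟨(isPartialMatching_succ_iff hk).2 h, hk⟩
  · refine (sum_bij (fun p _ => insert (p.2, k) p.1) ?_ ?_ ?_ fun _ _ => rfl).symm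
    · rintro ⟨C, c⟩ h
      simp only [mem_sigma, mem_partialMatchings] at h
      exact mem_filter.2 ⟨mem_partialMatchings.2 (h.1.insert h.2), by simp [ends_insert]⟩
    · rintro ⟨C, c⟩ h ⟨D, d⟩ h' heq
      simp only [mem_sigma, mem_partialMatchings] at h h'
      have hcd : c = d := by
        have : (c, k) ∈ insert (d, k) D := heq ▸ mem_insert_self _ _
        rcases mem_insert.1 this with h | h
        · exact congrArg Prod.fst h
        · exact absurd (h'.1.1 _ h).2 (lt_irrefl k)
      subst hcd
      have hC : (c, k) ∉ C := fun hck => lt_irrefl k (h.1.1 _ hck).2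
      have hD : (c, k) ∉ D := fun hck => lt_irrefl k (h'.1.1 _ hck).2
      rw [← erase_insert hC, ← erase_insert hD, heq]
    · intro C h
      obtain ⟨hC, hk⟩ := mem_filter.1 h
      obtain ⟨e, he, hke⟩ := mem_ends.1 hk
      have hek : e.2 = k := by
        have := (mem_partialMatchings.1 hC).1 e he
        omega
      obtain ⟨hC', he'⟩ := (mem_partialMatchings.1 hC).erase he hek
      refine ⟨⟨C.erase e, e.1⟩, mem_sigma.2 ⟨mem_partialMatchings.2 hC', he'⟩, ?_⟩
      rw [← hek, insert_erase he]

end PartialMatching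

section Weight

/-- An open point stands for a chord closing after every chord of `C`.
`R e x := e.1 < x ∧ x < e.2` gives the crossings, `R e x := x < e.1` the nestings. -/
def pairCount (R : ℕ × ℕ → ℕ → Prop) [∀ e x, Decidable (R e x)] (C : Finset (ℕ × ℕ))
    (O : Finset ℕ) : ℕ :=
  ∑ e ∈ C, (#{f ∈ C | R e f.1 ∧ e.2 < f.2} + #{o ∈ O | R e o})

variable {R : ℕ × ℕ → ℕ → Prop} [∀ e x, Decidable (R e x)] {C : Finset (ℕ × ℕ)} {O : Finset ℕ}
  {k : ℕ}

lemma pairCount_insert_right (hk : ∀ e ∈ C, ¬ R e k) :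
    pairCount R C (insert k O) = pairCount R C O :=
  sum_congr rfl fun e he => by rw [filter_insert, if_neg (hk e he)]

lemma pairCount_insert_erase {c : ℕ} (hC : ∀ e ∈ C, e.2 < k) (hc : c ∈ O) :
    pairCount R (insert (c, k) C) (O.erase c) =
      pairCount R C O + #{o ∈ O.erase c | R (c, k) o} := by
  have hnot : (c, k) ∉ C := fun h => lt_irrefl k (hC _ h)
  have hnew : #{f ∈ insert (c, k) C | R (c, k) f.1 ∧ k < f.2} = 0 := by
    refine card_eq_zero.2 (filter_eq_empty_iff.2 fun f hf h => ?_)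
    rcases mem_insert.1 hf with rfl | hf
    · exact lt_irrefl _ h.2
    · exact lt_asymm h.2 (hC f hf)
  -- for an older chord `e`, the point `c` moves from the open points to the chord `(c, k)`
  have hold : ∀ e ∈ C,
      #{f ∈ insert (c, k) C | R e f.1 ∧ e.2 < f.2} + #{o ∈ O.erase c | R e o} =
        #{f ∈ C | R e f.1 ∧ e.2 < f.2} + #{o ∈ O | R e o} := by
    intro e he
    rw [card_filter_insert_of_notMem hnot, ← insert_erase hc,
      card_filter_insert_of_notMem (notMem_erase c O), erase_insert_eq_erase, erase_idem]
    simp only [hC e he, and_true]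
    ring
  rw [pairCount, sum_insert hnot, hnew, zero_add, sum_congr rfl hold, pairCount, add_comm]

def weight (q qN : ℝ) (C : Finset (ℕ × ℕ)) (O : Finset ℕ) : ℝ :=
  q ^ pairCount (fun e x => e.1 < x ∧ x < e.2) C O * qN ^ pairCount (fun e x => x < e.1) C O

variable {q qN : ℝ}

lemma weight_insert_right (hC : ∀ e ∈ C, e.1 < e.2 ∧ e.2 < k) :
    weight q qN C (insert k O) = weight q qN C O := by
  rw [weight, weight, pairCount_insert_right, pairCount_insert_right] <;>
  · intro e he
    have := hC e he
    omega

lemma weight_insert_erase {c : ℕ} (hC : ∀ e ∈ C, e.2 < k) (hO : ∀ o ∈ O, o < k) (hc : c ∈ O) :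
    weight q qN (insert (c, k) C) (O.erase c) =
      weight q qN C O * (q ^ #{o ∈ O | c < o} * qN ^ #{o ∈ O | o < c}) := by
  have hcross : #{o ∈ O.erase c | c < o ∧ o < k} = #{o ∈ O | c < o} := by
    rw [filter_erase, erase_eq_of_notMem (by simp)]
    exact congrArg card (filter_congr fun o ho => by simp [hO o ho])
  have hnest : #{o ∈ O.erase c | o < c} = #{o ∈ O | o < c} := by
    rw [filter_erase, erase_eq_of_notMem (by simp)]
  rw [weight, weight, pairCount_insert_erase hC hc, pairCount_insert_erase hC hc, hcross, hnest]
  ring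

end Weight

section TransferRecursion

noncomputable def configSum (q qN : ℝ) (k l : ℕ) : ℝ :=
  ∑ C ∈ partialMatchings k, if #(openPoints k C) = l then weight q qN C (openPoints k C) else 0

variable {q qN : ℝ} {k : ℕ}

lemma configSum_zero (l : ℕ) : configSum q qN 0 l = delta0 l := by
  simp [configSum, partialMatchings_zero, openPoints, delta0, weight, pairCount, eq_comm]

lemma configSum_succ (l : ℕ) :
    configSum q qN (k + 1) l =
      (if l = 0 then 0 else configSum q qN k (l - 1)) + eta q qN l * configSum q qN k (l + 1) := by
  rw [configSum, sum_partialMatchings_succ, sum_add_distrib]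
  congr 1
  · have hopen : ∀ C ∈ partialMatchings k,
        (if #(openPoints (k + 1) C) = l then weight q qN C (openPoints (k + 1) C) else 0) =
          if #(openPoints k C) + 1 = l then weight q qN C (openPoints k C) else 0 := by
      intro C hC
      have hC := mem_partialMatchings.1 hC
      have hk : k ∉ ends C := fun h => (hC.lt_of_mem_ends h).false
      rw [openPoints_succ hk, card_insert_of_notMem (by simp), weight_insert_right hC.1]
    rw [sum_congr rfl hopen]
    rcases l with _ | l
    · simp
    · simp [configSum]
  · rw [configSum, mul_sum]
    refine sum_congr rfl fun C hC => ?_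
    have hC := mem_partialMatchings.1 hC
    simp_rw [openPoints_succ_insert]
    by_cases hl : #(openPoints k C) = l + 1
    · calc _ = ∑ c ∈ openPoints k C, weight q qN C (openPoints k C) *
              (q ^ #{o ∈ openPoints k C | c < o} * qN ^ #{o ∈ openPoints k C | o < c}) := by
            refine sum_congr rfl fun c hc => ?_
            rw [card_erase_of_mem hc, hl, Nat.add_sub_cancel, if_pos rfl,
              weight_insert_erase (fun e he => (hC.1 e he).2) (fun o ho => (mem_openPoints.1 ho).1)
                hc]
        _ = _ := by rw [← mul_sum, ← eta_eq_sum_pow_card_filter q qN hl, if_pos hl, mul_comm]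
    · rw [if_neg hl, mul_zero]
      refine sum_eq_zero fun c hc => if_neg ?_
      have := card_pos.2 ⟨c, hc⟩
      rw [card_erase_of_mem hc]
      omega

lemma configSum_eq_iterate (k l : ℕ) : configSum q qN k l = (transfer q qN)^[k] delta0 l := by
  induction k generalizing l with
  | zero => exact configSum_zero l
  | succ k ih =>
    rw [Function.iterate_succ_apply', configSum_succ, ih, ih]
    rfl

end TransferRecursion

section FinChordDiagrams

def valPair (N : ℕ) : Fin N × Fin N ↪ ℕ × ℕ := Fin.valEmbedding.prodMap Fin.valEmbedding

@[simp]
lemma valPair_apply {N : ℕ} (e : Fin N × Fin N) : valPair N e = ((e.1 : ℕ), (e.2 : ℕ)) := rfl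

variable {N : ℕ} {M : Finset (Fin N × Fin N)}

lemma isChordDiagram_iff :
    IsChordDiagram M ↔
      IsPartialMatching N (M.map (valPair N)) ∧ openPoints N (M.map (valPair N)) = ∅ := by
  rw [IsPartialMatching, coe_map, (valPair N).injective.injOn.pairwiseDisjoint_image]
  simp only [IsChordDiagram, openPoints, sdiff_eq_empty_iff_subset, subset_iff, mem_range,
    mem_ends, mem_map, exists_exists_and_eq_and, forall_exists_index, and_imp,
    forall_apply_eq_imp_iff₂, valPair_apply, Fin.lt_def]
  constructor
  · rintro ⟨hlt, hex⟩
    refine ⟨⟨fun e he => ⟨hlt e he, e.2.isLt⟩, fun e he f hf hef => ?_⟩, fun x hx => ?_⟩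
    · refine Finset.disjoint_left.2 fun x hxe hxf => hef ?_
      simp only [Function.comp_apply, valPair_apply, mem_insert, mem_singleton] at hxe hxf
      rcases hxe with rfl | rfl <;> simp only [Fin.val_inj] at hxf
      · exact (hex e.1).unique ⟨he, Or.inl rfl⟩ ⟨hf, hxf⟩
      · exact (hex e.2).unique ⟨he, Or.inr rfl⟩ ⟨hf, hxf⟩
    · obtain ⟨e, ⟨he, hxe⟩, -⟩ := hex ⟨x, hx⟩
      exact ⟨e, he, by simpa only [Fin.ext_iff] using hxe⟩
  · rintro ⟨⟨hlt, hdisj⟩, hcov⟩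
    refine ⟨fun e he => (hlt e he).1, fun x => ?_⟩
    obtain ⟨e, he, hxe⟩ := hcov x.isLt
    refine ⟨e, ⟨he, by simpa only [Fin.val_inj] using hxe⟩, fun f ⟨hf, hxf⟩ => ?_⟩
    by_contra hne
    have hmem : ∀ g : Fin N × Fin N, (x = g.1 ∨ x = g.2) →
        (x : ℕ) ∈ ((fun e => ({e.1, e.2} : Finset ℕ)) ∘ valPair N) g := by
      rintro g (rfl | rfl) <;> simp
    exact Finset.disjoint_left.1 (hdisj hf he hne) (hmem f hxf)
      (hmem e (by simpa only [Fin.val_inj] using hxe))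

lemma map_filter_valPair {C : Finset (ℕ × ℕ)} (hC : IsPartialMatching N C) :
    ({e | valPair N e ∈ C} : Finset (Fin N × Fin N)).map (valPair N) = C := by
  ext ⟨a, b⟩
  simp only [mem_map, mem_filter, mem_univ, true_and]
  refine ⟨fun ⟨e, he, hab⟩ => hab ▸ he, fun h => ?_⟩
  have hab := hC.1 _ h
  exact ⟨(⟨a, hab.1.trans hab.2⟩, ⟨b, hab.2⟩), h, rfl⟩

lemma crossings_eq_pairCount :
    crossings M = pairCount (fun e x => e.1 < x ∧ x < e.2) (M.map (valPair N)) ∅ := by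
  rw [crossings, card_filter, sum_product, pairCount, sum_map]
  refine sum_congr rfl fun e _ => ?_
  rw [filter_empty, card_empty, add_zero, card_filter, sum_map]
  simp [and_assoc]

lemma nestings_eq_pairCount :
    nestings M = pairCount (fun e x => x < e.1) (M.map (valPair N)) ∅ := by
  rw [nestings, card_filter, sum_product, sum_comm, pairCount, sum_map]
  refine sum_congr rfl fun e _ => ?_
  rw [filter_empty, card_empty, add_zero, card_filter, sum_map]
  simp

lemma sum_chordDiagrams_eq_configSum (q qN : ℝ) (N : ℕ) :
    ∑ M ∈ univ.filter (fun M : Finset (Fin N × Fin N) => IsChordDiagram M),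
      q ^ crossings M * qN ^ nestings M = configSum q qN N 0 := by
  have hclosed : configSum q qN N 0 =
      ∑ C ∈ (partialMatchings N).filter (openPoints N · = ∅), weight q qN C ∅ := by
    rw [configSum, sum_filter]
    refine sum_congr rfl fun C _ => ?_
    simp only [card_eq_zero]
    split_ifs with h <;> simp only [h]
  rw [hclosed]
  refine sum_nbij' (·.map (valPair N)) (fun C => ({e | valPair N e ∈ C} : Finset _))
    (fun M hM => ?_) (fun C hC => ?_) (fun M _ => ?_) (fun C hC => ?_) (fun M _ => ?_)
  · rw [mem_filter, isChordDiagram_iff] at hM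
    exact mem_filter.2 ⟨mem_partialMatchings.2 hM.2.1, hM.2.2⟩
  · obtain ⟨hC, hopen⟩ := mem_filter.1 hC
    rw [mem_partialMatchings] at hC
    rw [mem_filter, isChordDiagram_iff, map_filter_valPair hC]
    exact ⟨mem_univ _, hC, hopen⟩
  · ext e
    simp only [mem_filter, mem_univ, true_and, mem_map']
  · exact map_filter_valPair (mem_partialMatchings.1 (mem_filter.1 hC).1)
  · rw [weight, crossings_eq_pairCount, nestings_eq_pairCount]

end FinChordDiagrams

end ChordDiagram

/-- Transfer matrix representation of the chord diagram generating function: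
`Σ_π q^(cr π) q_N^(ne π) = ⟨0| T^(2n) |0⟩`, the sum over perfect matchings `π` of
`{1, …, 2n}`; and the odd entries `⟨0| T^(2n+1) |0⟩` vanish. -/
theorem chord_sum_eq_transfer_matrix_entry (q qN : ℝ) (n : ℕ) :
    (∑ M ∈ Finset.univ.filter
        (fun M : Finset (Fin (2 * n) × Fin (2 * n)) => IsChordDiagram M),
        q ^ crossings M * qN ^ nestings M) = (transfer q qN)^[2 * n] delta0 0 ∧
    (transfer q qN)^[2 * n + 1] delta0 0 = 0 :=
  ⟨(ChordDiagram.sum_chordDiagrams_eq_configSum q qN (2 * n)).trans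
      (ChordDiagram.configSum_eq_iterate _ _),
    iterate_transfer_delta0_of_odd q qN (by simp)⟩
end

section
/- Let q be a real number with 0 < q < 1. Then (1/(2π)) · ∫_0^π [Π_{k=1}^∞ (1 − q^k)] · [Π_{k=0}^∞ (1 − 2 q^k cos(2θ) + q^(2k))] dθ = 1. -/
/-!
For finite `N`, Gauss's `q`-binomial theorem expands `∏_{k<N} (1 - q^k z)` as
`∑_j (-1)^j q^(j choose 2) [N, j] z^j` with Gaussian binomials `[N, j]`. At `z = e^{2iθ}` the
truncated integrand `∏_{k<N} (1 - 2 q^k cos 2θ + q^{2k})` is the squared modulus of this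
polynomial, so orthogonality of the `e^{2ijθ}` on `[0, π]` gives the integral
`π ∑_j q^(j(j-1)) [N, j]²`. Splitting one factor `[N, j]` by the `q`-Pascal rule, two instances
of the `q`-Vandermonde identity evaluate this sum at `N = M + 1` to `2 [2M+1, M]`, which tends to
`2 / (q;q)_∞`. The truncated products converge uniformly in `θ`, so the integrals converge to the
integral of the infinite product.
-/

open Finset Filter Topology
open scoped Real

namespace QHermite

section QBinomial

variable {K : Type*} [Field K] {q : K}

/-- `qPochhammer q n` is `(q;q)_n`. -/
def qPochhammer (q : K) (n : ℕ) : K := ∏ k ∈ range n, (1 - q ^ (k + 1))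

def qBinom (q : K) (n k : ℕ) : K :=
  if k ≤ n then qPochhammer q n / (qPochhammer q k * qPochhammer q (n - k)) else 0

@[simp] lemma qPochhammer_zero : qPochhammer q 0 = 1 := prod_range_zero _

lemma qPochhammer_succ (n : ℕ) : qPochhammer q (n + 1) = qPochhammer q n * (1 - q ^ (n + 1)) :=
  prod_range_succ _ _

lemma qPochhammer_ne_zero (hq : ∀ n : ℕ, q ^ (n + 1) ≠ 1) (n : ℕ) : qPochhammer q n ≠ 0 :=
  prod_ne_zero_iff.mpr fun k _ ↦ sub_ne_zero.mpr (hq k).symm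

lemma qBinom_add (m n : ℕ) :
    qBinom q (m + n) m = qPochhammer q (m + n) / (qPochhammer q m * qPochhammer q n) := by
  simp [qBinom]

lemma qBinom_symm_add (m n : ℕ) : qBinom q (m + n) m = qBinom q (m + n) n := by
  rw [qBinom_add, add_comm, qBinom_add, mul_comm]

lemma qBinom_of_lt {n k : ℕ} (h : n < k) : qBinom q n k = 0 := by
  simp [qBinom, h.not_ge]

variable (hq : ∀ n : ℕ, q ^ (n + 1) ≠ 1)
include hq

lemma qBinom_zero_right (n : ℕ) : qBinom q n 0 = 1 := by
  simp [qBinom, qPochhammer_ne_zero hq]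

lemma qBinom_self (n : ℕ) : qBinom q n n = 1 := by
  simpa using (qBinom_symm_add (q := q) n 0).trans (qBinom_zero_right hq _)

lemma qBinom_add_succ_succ (m n : ℕ) :
    qBinom q (m + 1 + (n + 1)) (m + 1) = qBinom q (m + (n + 1)) m
      + q ^ (m + 1) * qBinom q (m + 1 + n) (m + 1) ∧
    qBinom q (m + 1 + (n + 1)) (m + 1) = q ^ (n + 1) * qBinom q (m + (n + 1)) m
      + qBinom q (m + 1 + n) (m + 1) := by
  have hP := qPochhammer_ne_zero hq
  have hm := sub_ne_zero.mpr (hq m).symm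
  have hn := sub_ne_zero.mpr (hq n).symm
  simp only [qBinom_add]
  rw [show m + 1 + (n + 1) = m + n + 1 + 1 by ring, show m + (n + 1) = m + n + 1 by ring,
    show m + 1 + n = m + n + 1 by ring]
  simp only [qPochhammer_succ]
  constructor <;> field_simp [hP] <;> ring

lemma qBinom_succ_succ (n k : ℕ) :
    qBinom q (n + 1) (k + 1) = qBinom q n k + q ^ (k + 1) * qBinom q n (k + 1) := by
  rcases lt_trichotomy k n with h | rfl | h
  · obtain ⟨d, rfl⟩ := Nat.exists_eq_add_of_lt h
    simpa [add_right_comm, add_assoc] using (qBinom_add_succ_succ hq k d).1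
  · simp [qBinom_self hq, qBinom_of_lt (Nat.lt_succ_self k)]
  · simp [qBinom_of_lt h, qBinom_of_lt (h.trans (Nat.lt_succ_self k)),
      qBinom_of_lt (Nat.succ_lt_succ h)]

lemma qBinom_succ_succ' (n k : ℕ) :
    qBinom q (n + 1) (k + 1) = q ^ (n - k) * qBinom q n k + qBinom q n (k + 1) := by
  rcases lt_trichotomy k n with h | rfl | h
  · obtain ⟨d, rfl⟩ := Nat.exists_eq_add_of_lt h
    simpa [add_right_comm, add_assoc] using (qBinom_add_succ_succ hq k d).2
  · simp [qBinom_self hq, qBinom_of_lt (Nat.lt_succ_self k)]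
  · simp [qBinom_of_lt h, qBinom_of_lt (h.trans (Nat.lt_succ_self k)),
      qBinom_of_lt (Nat.succ_lt_succ h)]

/-- The `q`-Vandermonde identity, with the shift `s` placed so that all exponents are natural. -/
theorem qBinom_add_eq_sum (m n s : ℕ) :
    qBinom q (m + n) (n + s) =
      ∑ j ∈ range (n + 1), q ^ (j * (j + s)) * qBinom q m (j + s) * qBinom q n j := by
  induction n generalizing s with
  | zero => simp [qBinom_zero_right hq]
  | succ n ih =>
    -- Pascal's rule `[n+1, i+1] = q^(n-i) [n, i] + [n, i+1]` splits the sum into the cases `s + 1`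
    -- and `s` of the induction hypothesis; the other Pascal rule recombines them.
    have hshift : ∑ i ∈ range (n + 1), q ^ ((i + 1) * (i + 1 + s)) *
        qBinom q m (i + 1 + s) * (q ^ (n - i) * qBinom q n i) =
        q ^ (n + s + 1) * qBinom q (m + n) (n + s + 1) := by
      rw [add_assoc n, ih, mul_sum]
      refine sum_congr rfl fun i hi ↦ ?_
      have hin : i ≤ n := Nat.lt_succ_iff.mp (mem_range.mp hi)
      rw [show (i + 1) * (i + 1 + s) = i * (i + (s + 1)) + (s + 1) + i by ring,
        show i + 1 + s = i + (s + 1) by ring, show n + (s + 1) = (s + 1) + i + (n - i) by omega]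
      simp only [pow_add]
      ring
    have hstay : ∑ i ∈ range (n + 1), q ^ ((i + 1) * (i + 1 + s)) *
        qBinom q m (i + 1 + s) * qBinom q n (i + 1) + qBinom q m s = qBinom q (m + n) (n + s) := by
      have h := sum_range_succ' (fun j ↦ q ^ (j * (j + s)) * qBinom q m (j + s) * qBinom q n j)
        (n + 1)
      rw [sum_range_succ, qBinom_of_lt (Nat.lt_succ_self n), mul_zero, add_zero] at h
      simp only [zero_add, zero_mul, pow_zero, one_mul, qBinom_zero_right hq, mul_one] at h
      rw [ih, h]
    rw [sum_range_succ', add_right_comm n 1 s, ← add_assoc, qBinom_succ_succ hq, ← hshift,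
      ← hstay]
    simp only [qBinom_succ_succ' hq, mul_add, sum_add_distrib, mul_one, zero_mul, pow_zero,
      zero_add, one_mul, qBinom_zero_right hq]
    ring

theorem prod_one_sub_pow_smul_eq_sum_qBinom {A : Type*} [CommRing A] [Algebra K A]
    (N : ℕ) (z : A) :
    ∏ k ∈ range N, (1 - q ^ k • z) =
      ∑ j ∈ range (N + 1), ((-1) ^ j * q ^ j.choose 2 * qBinom q N j) • z ^ j := by
  induction N generalizing z with
  | zero => simp [qBinom_zero_right hq]
  | succ N ih =>
    set c : ℕ → K := fun j ↦ (-1) ^ j * q ^ j.choose 2 * qBinom q N j * q ^ j with hc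
    have hcoeff : ∀ j, (-1) ^ (j + 1) * q ^ (j + 1).choose 2 * qBinom q (N + 1) (j + 1) =
        c (j + 1) - c j := by
      intro j
      simp only [hc, qBinom_succ_succ hq, Nat.choose_succ_succ' j 1, Nat.choose_one_right, pow_add]
      ring
    have hsum := sum_range_succ' (fun j ↦ c j • z ^ j) (N + 1)
    rw [sum_range_succ, show c (N + 1) = 0 by simp [hc, qBinom_of_lt (Nat.lt_succ_self N)],
      zero_smul, add_zero] at hsum
    have hshift : ∀ k : ℕ, q ^ (k + 1) • z = q ^ k • q • z := fun k ↦ by rw [pow_succ, mul_smul]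
    rw [prod_range_succ', pow_zero, one_smul]
    simp_rw [hshift]
    rw [ih, sum_range_succ' _ (N + 1)]
    simp_rw [smul_pow, smul_smul, hcoeff, sub_smul, sum_sub_distrib]
    rw [mul_sub, mul_one, sum_mul, hsum]
    simp only [hc, pow_succ, mul_neg, mul_one, neg_mul, neg_smul, sum_neg_distrib, pow_zero,
      Nat.choose_zero_succ, qBinom_zero_right hq, one_smul, Algebra.smul_mul_assoc]
    abel

theorem sum_pow_mul_qBinom_sq (M : ℕ) :
    ∑ j ∈ range (M + 2), q ^ (j * (j - 1)) * qBinom q (M + 1) j ^ 2 =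
      2 * qBinom q (M + (M + 1)) M := by
  have hA : qBinom q (M + (M + 1)) M =
      ∑ j ∈ range (M + 1), q ^ (j * (j + 1)) * qBinom q (M + 1) (j + 1) * qBinom q M j := by
    rw [qBinom_symm_add, add_comm M, qBinom_add_eq_sum hq (M + 1) M 1]
  have hB : qBinom q (M + (M + 1)) M =
      ∑ j ∈ range (M + 2), q ^ (j * j) * qBinom q (M + 1) j * qBinom q M j := by
    rw [sum_range_succ, qBinom_of_lt (Nat.lt_succ_self M), mul_zero, add_zero, add_comm M]
    simpa using qBinom_add_eq_sum hq (M + 1) M 0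
  rw [two_mul]
  nth_rewrite 1 [hA]
  rw [hB, sum_range_succ' _ (M + 1), sum_range_succ' _ (M + 1), ← add_assoc, ← sum_add_distrib]
  congr 1
  · refine sum_congr rfl fun i _ ↦ ?_
    rw [sq]
    nth_rewrite 2 [qBinom_succ_succ hq]
    simp only [Nat.add_sub_cancel]
    ring
  · simp [qBinom_zero_right hq]

end QBinomial

section Fourier

open Complex

lemma integral_exp_two_mul_int_mul_I (n : ℤ) :
    ∫ θ in (0 : ℝ)..π, exp (2 * n * θ * I) = if n = 0 then (π : ℂ) else 0 := by
  split_ifs with hn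
  · simp [hn]
  · have hc : (2 * n * I : ℂ) ≠ 0 := by simp [hn, I_ne_zero]
    have hperiod : exp (2 * n * I * π) = 1 := by
      rw [← exp_int_mul_two_pi_mul_I n]; ring_nf
    simp_rw [show ∀ θ : ℝ, (2 * n * θ * I : ℂ) = 2 * n * I * θ from fun θ ↦ by ring]
    rw [integral_exp_mul_complex hc, hperiod]
    simp

lemma integral_sum_mul_sum_exp (s : Finset ℕ) (a b : ℕ → ℂ) :
    ∫ θ in (0 : ℝ)..π, (∑ j ∈ s, a j * exp (2 * θ * I) ^ j) *
        (∑ l ∈ s, b l * exp (-(2 * θ * I)) ^ l) = π * ∑ j ∈ s, a j * b j := by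
  have hterm : ∀ j l : ℕ, ∀ θ : ℝ, a j * exp (2 * θ * I) ^ j * (b l * exp (-(2 * θ * I)) ^ l) =
      a j * b l * exp (2 * ((j - l : ℤ) : ℂ) * θ * I) := by
    intro j l θ
    rw [← exp_nat_mul, ← exp_nat_mul, mul_mul_mul_comm, ← exp_add]
    push_cast
    ring_nf
  simp_rw [sum_mul_sum, hterm]
  rw [intervalIntegral.integral_finsetSum fun j _ ↦ ?_]
  · rw [mul_sum]
    refine sum_congr rfl fun j hj ↦ ?_
    rw [intervalIntegral.integral_finsetSum fun l _ ↦ ?_]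
    · simp_rw [intervalIntegral.integral_const_mul, integral_exp_two_mul_int_mul_I, sub_eq_zero,
        Nat.cast_inj, mul_ite, mul_zero]
      rw [sum_ite_eq s j, if_pos hj]
      ring
    · exact Continuous.intervalIntegrable (by fun_prop) _ _
  · exact Continuous.intervalIntegrable (by fun_prop) _ _

lemma ofReal_one_sub_two_mul_cos_add_sq (r x : ℝ) :
    ((1 - 2 * r * Real.cos x + r ^ 2 : ℝ) : ℂ) =
      (1 - r • exp (x * I)) * (1 - r • exp (-(x * I))) := by
  have hprod : exp (x * I) * exp (-(x * I)) = 1 := by rw [← exp_add]; simp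
  have hsum : exp (x * I) + exp (-(x * I)) = 2 * cos x := by rw [two_cos, neg_mul]
  simp only [real_smul]
  push_cast
  linear_combination (r : ℂ) * hsum - (r : ℂ) ^ 2 * hprod

theorem integral_prod_one_sub_two_mul_cos_add_eq_sum {q : ℝ} (hq : ∀ n : ℕ, q ^ (n + 1) ≠ 1)
    (N : ℕ) :
    ∫ θ in (0 : ℝ)..π, ∏ k ∈ range N, (1 - 2 * q ^ k * Real.cos (2 * θ) + q ^ (2 * k)) =
      π * ∑ j ∈ range (N + 1), q ^ (j * (j - 1)) * qBinom q N j ^ 2 := by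
  have hexpand : ∀ θ : ℝ,
      ((∏ k ∈ range N, (1 - 2 * q ^ k * Real.cos (2 * θ) + q ^ (2 * k)) : ℝ) : ℂ) =
        (∑ j ∈ range (N + 1), (((-1) ^ j * q ^ j.choose 2 * qBinom q N j : ℝ) : ℂ) *
            exp (2 * θ * I) ^ j) *
          (∑ j ∈ range (N + 1), (((-1) ^ j * q ^ j.choose 2 * qBinom q N j : ℝ) : ℂ) *
            exp (-(2 * θ * I)) ^ j) := by
    intro θ
    simp_rw [ofReal_prod, pow_mul', ofReal_one_sub_two_mul_cos_add_sq, prod_mul_distrib,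
      prod_one_sub_pow_smul_eq_sum_qBinom hq, real_smul]
    push_cast
    rfl
  apply ofReal_injective
  rw [← intervalIntegral.integral_ofReal]
  simp_rw [hexpand, integral_sum_mul_sum_exp, ← ofReal_mul, ← ofReal_sum, ← ofReal_mul]
  congr 2
  refine sum_congr rfl fun j _ ↦ ?_
  have hexp : q ^ (j * (j - 1)) = (q ^ j.choose 2) ^ 2 := by
    rw [← pow_mul, Nat.choose_two_right, Nat.div_mul_cancel j.even_mul_pred_self.two_dvd]
  have hsign : ((-1 : ℝ) ^ j) ^ 2 = 1 := by rw [← pow_mul, mul_comm, pow_mul, neg_one_sq, one_pow]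
  rw [hexp]
  linear_combination (q ^ j.choose 2 * qBinom q N j) ^ 2 * hsign

end Fourier

theorem tendsto_intervalIntegral_prod_range_one_add {R : Type*} [NormedCommRing R]
    [NormOneClass R] [CompleteSpace R] [NormedAlgebra ℝ R] {f : ℕ → ℝ → R} {u : ℕ → ℝ}
    {a b : ℝ} (hu : Summable u) (hfu : ∀ n, ∀ x ∈ Set.uIcc a b, ‖f n x‖ ≤ u n)
    (hf : ∀ n, ContinuousOn (f n) (Set.uIcc a b)) :
    Tendsto (fun N ↦ ∫ x in a..b, ∏ k ∈ range N, (1 + f k x)) atTop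
      (𝓝 (∫ x in a..b, ∏' k, (1 + f k x))) :=
  (Summable.hasProdUniformlyOn_nat_one_add isCompact_uIcc hu (.of_forall hfu) hf
    |>.tendstoUniformlyOn_finsetRange).tendsto_intervalIntegral_of_continuousOn
    (.of_forall fun _ ↦ continuousOn_finsetProd _ fun k _ ↦ continuousOn_const.add (hf k))

section Limits

variable {q : ℝ} (hq : |q| < 1)
include hq

lemma one_sub_pow_succ_pos (k : ℕ) : 0 < 1 - q ^ (k + 1) :=
  sub_pos.mpr <| (le_abs_self _).trans_lt <| by
    rw [abs_pow]; exact pow_lt_one₀ (abs_nonneg q) hq k.succ_ne_zero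

lemma summable_log_one_sub_pow_succ : Summable fun k : ℕ ↦ Real.log (1 - q ^ (k + 1)) := by
  simpa [sub_eq_add_neg, pow_succ'] using
    Real.summable_log_one_add_of_summable ((summable_geometric_of_abs_lt_one hq).mul_left q).neg

lemma tprod_one_sub_pow_succ_pos : 0 < ∏' k : ℕ, (1 - q ^ (k + 1)) := by
  rw [← Real.rexp_tsum_eq_tprod (one_sub_pow_succ_pos hq) (summable_log_one_sub_pow_succ hq)]
  exact Real.exp_pos _

lemma tendsto_qPochhammer :
    Tendsto (qPochhammer q) atTop (𝓝 (∏' k : ℕ, (1 - q ^ (k + 1)))) :=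
  (Real.multipliable_of_summable_log (one_sub_pow_succ_pos hq)
    (summable_log_one_sub_pow_succ hq)).tendsto_prod_tprod_nat

lemma tendsto_qBinom_add_self_succ :
    Tendsto (fun M ↦ qBinom q (M + (M + 1)) M) atTop (𝓝 (∏' k : ℕ, (1 - q ^ (k + 1)))⁻¹) := by
  have hP := tendsto_qPochhammer hq
  have hP0 := (tprod_one_sub_pow_succ_pos hq).ne'
  have hnum := hP.comp <|
    tendsto_atTop_mono (g := fun M ↦ M + (M + 1)) (fun M ↦ M.le_add_right _) tendsto_id
  have h := hnum.div (hP.mul (hP.comp (tendsto_add_atTop_nat 1))) (mul_ne_zero hP0 hP0)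
  rw [div_mul_cancel_left₀ hP0] at h
  exact h.congr fun M ↦ (qBinom_add M (M + 1)).symm

lemma tendsto_integral_prod_range_one_sub_two_mul_cos_add :
    Tendsto (fun N ↦ ∫ θ in (0 : ℝ)..π,
        ∏ k ∈ range N, (1 - 2 * q ^ k * Real.cos (2 * θ) + q ^ (2 * k))) atTop
      (𝓝 (∫ θ in (0 : ℝ)..π, ∏' k : ℕ, (1 - 2 * q ^ k * Real.cos (2 * θ) + q ^ (2 * k)))) := by
  have hbound : ∀ (k : ℕ) (θ : ℝ), ‖q ^ (2 * k) - 2 * q ^ k * Real.cos (2 * θ)‖ ≤ 3 * |q| ^ k := by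
    intro k θ
    have hsq : |q| ^ (2 * k) ≤ |q| ^ k := pow_le_pow_of_le_one (abs_nonneg q) hq.le (by omega)
    have hcos := Real.abs_cos_le_one (2 * θ)
    rw [Real.norm_eq_abs]
    calc |q ^ (2 * k) - 2 * q ^ k * Real.cos (2 * θ)|
        ≤ |q ^ (2 * k)| + |2 * q ^ k * Real.cos (2 * θ)| := abs_sub _ _
      _ ≤ |q| ^ k + 2 * |q| ^ k := by
        rw [abs_mul, abs_mul, abs_pow, abs_pow, abs_two]
        exact add_le_add hsq (mul_le_of_le_one_right (by positivity) hcos)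
      _ = 3 * |q| ^ k := by ring
  simp_rw [show ∀ (k : ℕ) (θ : ℝ), 1 - 2 * q ^ k * Real.cos (2 * θ) + q ^ (2 * k) =
    1 + (q ^ (2 * k) - 2 * q ^ k * Real.cos (2 * θ)) from fun _ _ ↦ by ring]
  exact tendsto_intervalIntegral_prod_range_one_add
    ((summable_geometric_of_abs_lt_one (by rwa [abs_abs])).mul_left 3)
    (fun k θ _ ↦ hbound k θ) (fun k ↦ by fun_prop)

end Limits

end QHermite

open QHermite

/-- Normalization of the q-Hermite measure (the `k = 0` moment of the Majorana
double-scaled SYK model):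
`(1/2π) ∫₀^π (q;q)_∞ (e^{2iθ};q)_∞ (e^{−2iθ};q)_∞ dθ = 1` for `0 < q < 1`. -/
theorem qHermite_measure_normalization (q : ℝ) (hq0 : 0 < q) (hq1 : q < 1) :
    (1 / (2 * Real.pi)) *
        ∫ θ in (0 : ℝ)..Real.pi,
          (∏' k : ℕ, (1 - q ^ (k + 1))) *
            (∏' k : ℕ, (1 - 2 * q ^ k * Real.cos (2 * θ) + q ^ (2 * k))) = 1 := by
  have hq : |q| < 1 := abs_lt.mpr ⟨by linarith, hq1⟩
  have hq' : ∀ n : ℕ, q ^ (n + 1) ≠ 1 := fun n ↦ (sub_pos.mp (one_sub_pow_succ_pos hq n)).ne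
  have hvalue : ∀ M : ℕ, ∫ θ in (0 : ℝ)..π,
      ∏ k ∈ range (M + 1), (1 - 2 * q ^ k * Real.cos (2 * θ) + q ^ (2 * k)) =
        2 * π * qBinom q (M + (M + 1)) M := fun M ↦ by
    rw [integral_prod_one_sub_two_mul_cos_add_eq_sum hq', sum_pow_mul_qBinom_sq hq']
    ring
  have hintegral : ∫ θ in (0 : ℝ)..π,
      ∏' k : ℕ, (1 - 2 * q ^ k * Real.cos (2 * θ) + q ^ (2 * k)) =
        2 * π * (∏' k : ℕ, (1 - q ^ (k + 1)))⁻¹ := by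
    refine tendsto_nhds_unique
      ((tendsto_integral_prod_range_one_sub_two_mul_cos_add hq).comp (tendsto_add_atTop_nat 1)) ?_
    simp_rw [Function.comp_def, hvalue]
    exact (tendsto_qBinom_add_self_succ hq).const_mul _
  rw [intervalIntegral.integral_const_mul, hintegral]
  field_simp [(tprod_one_sub_pow_succ_pos hq).ne', Real.pi_ne_zero]
end
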